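/- arXiv:2306.16205 — 2 statements merged into one kernel-verified Lean document; each statement's English description precedes it below -/
import Mathlib

section
/- Let T ≥ 1, let X_1, …, X_T be random variables taking values in finite sets (the per-timestep joint state-action pairs of the trajectory τ), let f_1, …, f_T be deterministic real-valued functions (the deterministic reward functions), set R_t = f_t(X_t) for each t, and let Z = ∑_{k=1}^T R_k (the return of the trajectory). Then for every t, the conditional mutual information between Z and X_t given X_{−t} = (X_k)_{k≠t} equals the conditional entropy of the reward at time t given the rest of the trajectory: I(Z ; X_t | X_{−t}) = H(R_t | X_{−t}). (Key step of the paper's Proposition 1: given all other timesteps, the only remaining randomness in the return Z is through R_t, since ∑_{k≠t} R_k is a deterministic function of X_{−t}.) -/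
open MeasureTheory ProbabilityTheory Filter

/-- `prOf X a = ℙ(X = a)`, the probability mass of a random variable at a point. -/
noncomputable def prOf {Ω : Type*} [MeasureSpace Ω] {α : Type*} (X : Ω → α) (a : α) : ℝ :=
  ((ℙ : Measure Ω) {ω | X ω = a}).toReal

/-- Conditional Shannon entropy
`H(X | Y) = ∑_y ℙ(Y = y) (−∑_x ℙ(X = x | Y = y) log ℙ(X = x | Y = y))`,
with `ℙ(X = x | Y = y) = ℙ(X = x ∧ Y = y) / ℙ(Y = y)` and the conventions `0 log 0 = 0`
and `x / 0 = 0`.  Stated with `tsum` so that it applies to random variables into arbitrary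
types; for random variables with finitely many values of positive probability (the only case
used here) it agrees with the usual finite sum. -/
noncomputable def condEntropy' {Ω : Type*} [MeasureSpace Ω] {α β : Type*}
    (X : Ω → α) (Y : Ω → β) : ℝ :=
  ∑' y : β, prOf Y y *
    (-∑' x : α, (prOf (fun ω => (X ω, Y ω)) (x, y) / prOf Y y) *
        Real.log (prOf (fun ω => (X ω, Y ω)) (x, y) / prOf Y y))

/-- Conditional mutual information `I(U ; V | W) = H(U | W) − H(U | V, W)`. -/
noncomputable def condMutualInfo' {Ω : Type*} [MeasureSpace Ω] {α β γ : Type*}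
    (U : Ω → α) (V : Ω → β) (W : Ω → γ) : ℝ :=
  condEntropy' U W - condEntropy' U (fun ω => (V ω, W ω))

lemma condEntropy'_of_det {Ω : Type*} [MeasureSpace Ω] {α β : Type*}
    (X : Ω → α) (Y : Ω → β) (g : β → α) (h : ∀ ω, X ω = g (Y ω)) :
    condEntropy' X Y = 0 := by
  have h1 : ∀ y x, (prOf (fun ω => (X ω, Y ω)) (x, y) / prOf Y y) *
      Real.log (prOf (fun ω => (X ω, Y ω)) (x, y) / prOf Y y) = 0 := by
    intro y x
    by_cases hx : x = g y
    · have hs : {ω | (X ω, Y ω) = (x, y)} = {ω | Y ω = y} := by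
        ext ω
        simp only [Set.mem_setOf_eq, Prod.mk.injEq]
        constructor
        · exact fun h' => h'.2
        · intro hY; exact ⟨by rw [h ω, hY, hx], hY⟩
      have : prOf (fun ω => (X ω, Y ω)) (x, y) = prOf Y y := by
        unfold prOf; rw [hs]
      rw [this]
      rcases eq_or_ne (prOf Y y) 0 with h0 | h0
      · simp [h0]
      · simp [div_self h0]
    · have hs : {ω | (X ω, Y ω) = (x, y)} = ∅ := by
        ext ω
        simp only [Set.mem_setOf_eq, Prod.mk.injEq, Set.mem_empty_iff_false, iff_false, not_and]
        intro hXx hYy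
        exact hx (by rw [← hXx, h ω, hYy])
      have : prOf (fun ω => (X ω, Y ω)) (x, y) = 0 := by
        unfold prOf; rw [hs]; simp
      rw [this]; simp
  unfold condEntropy'
  simp [h1]

lemma condEntropy'_comp_inj {Ω : Type*} [MeasureSpace Ω] {α α' β : Type*}
    (X : Ω → α) (X' : Ω → α') (Y : Ω → β) (φ : β → α → α')
    (hinj : ∀ y, Function.Injective (φ y)) (h : ∀ ω, X' ω = φ (Y ω) (X ω)) :
    condEntropy' X' Y = condEntropy' X Y := by
  unfold condEntropy'
  refine tsum_congr fun y => ?_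
  congr 2
  have key : ∀ x, prOf (fun ω => (X' ω, Y ω)) (φ y x, y) =
      prOf (fun ω => (X ω, Y ω)) (x, y) := by
    intro x
    have hs : {ω | ((fun ω => (X' ω, Y ω)) ω) = (φ y x, y)} =
        {ω | ((fun ω => (X ω, Y ω)) ω) = (x, y)} := by
      ext ω
      simp only [Set.mem_setOf_eq, Prod.mk.injEq]
      constructor
      · rintro ⟨h1, h2⟩
        refine ⟨hinj y ?_, h2⟩
        rw [← h1, h ω, h2]
      · rintro ⟨h1, h2⟩
        exact ⟨by rw [h ω, h2, h1], h2⟩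
    unfold prOf
    rw [hs]
  refine ((hinj y).tsum_eq ?_).symm.trans (tsum_congr fun x => by rw [key x])
  intro x' hx'
  by_contra hr
  have hs : {ω | (X' ω, Y ω) = (x', y)} = ∅ := by
    ext ω
    simp only [Set.mem_setOf_eq, Prod.mk.injEq, Set.mem_empty_iff_false, iff_false, not_and]
    intro h1 h2
    exact hr ⟨X ω, by rw [← h1, h ω, h2]⟩
  have : prOf (fun ω => (X' ω, Y ω)) (x', y) = 0 := by
    unfold prOf; rw [hs]; simp
  simp [Function.mem_support, this] at hx'

/-- **Key step of the paper's Proposition 1.** Let `τ = (X 1, …, X T)` be a trajectory of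
per-timestep joint state-action random variables with values in finite sets, let
`R t = f t (X t)` be the deterministic reward at time `t`, and `Z = ∑_k R k` the return.
Then for every `t`, the conditional mutual information between the return and the
timestep-`t` component given all other components `X_{−t}` equals the conditional entropy
of the reward at time `t` given the rest of the trajectory:
`I(Z ; X t | X_{−t}) = H(R t | X_{−t})`. -/
theorem condMutualInfo_return_eq_condEntropy_reward
    {Ω : Type*} [MeasureSpace Ω] [IsProbabilityMeasure (ℙ : Measure Ω)]
    {T : ℕ} (hT : 1 ≤ T)
    (S : Fin T → Type*) [∀ i, Fintype (S i)]
    [∀ i, MeasurableSpace (S i)] [∀ i, MeasurableSingletonClass (S i)]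
    (X : ∀ i : Fin T, Ω → S i) (hX : ∀ i, Measurable (X i))
    (f : ∀ i : Fin T, S i → ℝ) (t : Fin T) :
    condMutualInfo' (fun ω => ∑ k : Fin T, f k (X k ω)) (X t)
        (fun ω (i : {i : Fin T // i ≠ t}) => X i ω)
      = condEntropy' (fun ω => f t (X t ω))
          (fun ω (i : {i : Fin T // i ≠ t}) => X i ω) := by
  unfold condMutualInfo'
  have hsplit : ∀ ω, ∑ k : Fin T, f k (X k ω)
      = f t (X t ω) + ∑ i : {i : Fin T // i ≠ t}, f i.1 (X i.1 ω) := by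
    intro ω
    rw [← Finset.add_sum_erase Finset.univ (fun k => f k (X k ω)) (Finset.mem_univ t)]
    congr 1
    exact Finset.sum_subtype _ (fun i => by simp) _
  have hz : condEntropy' (fun ω => ∑ k : Fin T, f k (X k ω))
      (fun ω => (X t ω, fun i : {i : Fin T // i ≠ t} => X i ω)) = 0 :=
    condEntropy'_of_det _ _
      (fun p => f t p.1 + ∑ i : {i : Fin T // i ≠ t}, f i.1 (p.2 i))
      (fun ω => hsplit ω)
  rw [hz, sub_zero]
  exact condEntropy'_comp_inj (fun ω => f t (X t ω)) _ _
    (fun w r => r + ∑ i : {i : Fin T // i ≠ t}, f i.1 (w i))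
    (fun w => add_left_injective _) hsplit
end

section
/- Let T ≥ 1, let X_1, …, X_T be random variables taking values in finite sets, let f_1, …, f_T be deterministic real-valued functions, set R_t = f_t(X_t) and Z = ∑_{k=1}^T R_k. Fix t, and assume additionally that R_t is conditionally independent of (X_{t+1}, …, X_T) given (X_1, …, X_{t−1}). Then I(Z ; X_t | X_{−t}) = H(R_t | X_1, …, X_{t−1}). (Paper's Proposition 1: the information of the joint policy of team T_i at time t, I(Z(τ_{T_i}) ; τ_{T_i}^t | τ_{T_i}^{−t}), equals the entropy of the team reward at time t given the team-wide joint trajectory up to time t−1, H(TR_{i[n]}^t | τ_{T_i}^{1:t−1}).) -/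
/-!
The return is a function of `(X t, X_{−t})`, so `H(Z | X t, X_{−t}) = 0` and the mutual information
reduces to `H(Z | X_{−t})`. Given `X_{−t}`, the return `Z` is the reward `R t` shifted by a known
amount, and shifting each fiber by a bijection does not change its entropy, so
`H(Z | X_{−t}) = H(R t | X_{−t})`. Finally `X_{−t}` carries the same information as the pair
(future, past), and conditional independence makes every fiber entropy given (future, past)
equal to the one given the past alone.
-/

open MeasureTheory ProbabilityTheory Filter

open Real

section Entropy

variable {Ω : Type*} [MeasureSpace Ω] {α β γ : Type*}

noncomputable def condPrOf (X : Ω → α) (Y : Ω → β) (x : α) (y : β) : ℝ :=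
  prOf (fun ω => (X ω, Y ω)) (x, y) / prOf Y y

noncomputable def condEntropyAt (X : Ω → α) (Y : Ω → β) (y : β) : ℝ :=
  ∑' x, negMulLog (condPrOf X Y x y)

lemma condEntropy'_eq_tsum_condEntropyAt (X : Ω → α) (Y : Ω → β) :
    condEntropy' X Y = ∑' y, prOf Y y * condEntropyAt X Y y := by
  simp only [condEntropy', condEntropyAt, condPrOf, negMulLog, neg_mul, tsum_neg]

lemma prOf_nonneg (X : Ω → α) (x : α) : 0 ≤ prOf X x :=
  ENNReal.toReal_nonneg

lemma prOf_pair (X : Ω → α) (Y : Ω → β) (x : α) (y : β) :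
    prOf (fun ω => (X ω, Y ω)) (x, y) = (ℙ {ω | X ω = x ∧ Y ω = y}).toReal := by
  simp only [prOf, Prod.ext_iff]

lemma prOf_eq_zero_of_notMem_range {Y : Ω → β} {y : β} (hy : y ∉ Set.range Y) :
    prOf Y y = 0 := by
  have hempty : {ω | Y ω = y} = ∅ := Set.eq_empty_of_forall_notMem fun ω h => hy ⟨ω, h⟩
  simp [prOf, hempty]

lemma prOf_comp_of_injective {u : β → γ} (hu : Function.Injective u) (Y : Ω → β) (y : β) :
    prOf (fun ω => u (Y ω)) (u y) = prOf Y y := by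
  simp only [prOf, hu.eq_iff]

lemma condEntropyAt_comp_self (g : β → α) (Y : Ω → β) (y : β) :
    condEntropyAt (fun ω => g (Y ω)) Y y = 0 := by
  refine (tsum_congr fun x => ?_).trans tsum_zero
  by_cases hx : x = g y
  · have hjoint : prOf (fun ω => (g (Y ω), Y ω)) (x, y) = prOf Y y := by
      subst hx
      unfold prOf
      congr 2
      ext ω
      simp only [Prod.mk.injEq]
      exact ⟨And.right, fun h => ⟨h ▸ rfl, h⟩⟩
    rw [condPrOf, hjoint]
    rcases eq_or_ne (prOf Y y) 0 with hy | hy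
    · simp [hy]
    · simp [div_self hy]
  · have hjoint : prOf (fun ω => (g (Y ω), Y ω)) (x, y) = 0 := by
      refine prOf_eq_zero_of_notMem_range ?_
      rintro ⟨ω, hω⟩
      simp only [Prod.mk.injEq] at hω
      exact hx (hω.2 ▸ hω.1.symm)
    simp [condPrOf, hjoint]

lemma condEntropy'_comp_self (g : β → α) (Y : Ω → β) :
    condEntropy' (fun ω => g (Y ω)) Y = 0 := by
  simp [condEntropy'_eq_tsum_condEntropyAt, condEntropyAt_comp_self]

lemma condEntropyAt_fiberwise_equiv (e : β → α ≃ γ) (R : Ω → α) (Y : Ω → β) (y : β) :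
    condEntropyAt (fun ω => e (Y ω) (R ω)) Y y = condEntropyAt R Y y := by
  have hfiber : ∀ x, condPrOf (fun ω => e (Y ω) (R ω)) Y x y
      = condPrOf R Y ((e y).symm x) y := by
    intro x
    simp only [condPrOf, prOf]
    congr 3
    ext ω
    simp only [Prod.mk.injEq]
    constructor
    · rintro ⟨hx, rfl⟩
      exact ⟨(e (Y ω)).eq_symm_apply.mpr hx, rfl⟩
    · rintro ⟨hx, rfl⟩
      exact ⟨(e (Y ω)).eq_symm_apply.mp hx, rfl⟩
  simp only [condEntropyAt, hfiber]
  exact (e y).symm.tsum_eq fun x => negMulLog (condPrOf R Y x y)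

lemma condEntropy'_add_comp [AddGroup α] (R : Ω → α) (g : β → α) (Y : Ω → β) :
    condEntropy' (fun ω => R ω + g (Y ω)) Y = condEntropy' R Y := by
  simp only [condEntropy'_eq_tsum_condEntropyAt]
  exact tsum_congr fun y => congrArg (prOf Y y * ·)
    (condEntropyAt_fiberwise_equiv (fun b => Equiv.addRight (g b)) R Y y)

lemma condPrOf_comp_right_of_injective (R : Ω → α) (Y : Ω → β) {u : β → γ}
    (hu : Function.Injective u) (x : α) (y : β) :
    condPrOf R (fun ω => u (Y ω)) x (u y) = condPrOf R Y x y := by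
  rw [condPrOf, condPrOf, prOf_comp_of_injective hu,
    ← prOf_comp_of_injective (Function.injective_id.prodMap hu) (fun ω => (R ω, Y ω)) (x, y)]
  rfl

lemma condEntropy'_comp_right_of_injective (R : Ω → α) (Y : Ω → β) {u : β → γ}
    (hu : Function.Injective u) :
    condEntropy' R (fun ω => u (Y ω)) = condEntropy' R Y := by
  simp only [condEntropy'_eq_tsum_condEntropyAt]
  refine Eq.trans (hu.tsum_eq fun c hc => ?_).symm ?_
  · by_contra hrange
    refine hc ?_
    dsimp only
    rw [prOf_eq_zero_of_notMem_range fun ⟨ω, hω⟩ => hrange ⟨Y ω, hω⟩, zero_mul]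
  · simp only [condEntropyAt, prOf_comp_of_injective hu,
      condPrOf_comp_right_of_injective R Y hu]

lemma prOf_pair_le_right [IsFiniteMeasure (ℙ : Measure Ω)] (X : Ω → α) (Y : Ω → β)
    (x : α) (y : β) : prOf (fun ω => (X ω, Y ω)) (x, y) ≤ prOf Y y := by
  rw [prOf_pair]
  exact ENNReal.toReal_mono (measure_ne_top _ _) (measure_mono fun ω h => h.2)

lemma prOf_eq_sum_prOf_pair [IsFiniteMeasure (ℙ : Measure Ω)] [Fintype α] [MeasurableSpace α]
    [MeasurableSingletonClass α] {X : Ω → α} (hX : Measurable X) (Y : Ω → β) (y : β) :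
    prOf Y y = ∑ x, prOf (fun ω => (X ω, Y ω)) (x, y) := by
  have hfibers : ∑ x, (ℙ : Measure Ω).restrict {ω | Y ω = y} (X ⁻¹' {x}) = ℙ {ω | Y ω = y} := by
    rw [sum_measure_preimage_singleton _ fun x _ => hX (measurableSet_singleton x),
      Finset.coe_univ, Set.preimage_univ, Measure.restrict_apply_univ]
  rw [prOf, ← hfibers, ENNReal.toReal_sum fun x _ => measure_ne_top _ _]
  refine Finset.sum_congr rfl fun x _ => ?_
  rw [Measure.restrict_apply (hX (measurableSet_singleton x)), prOf_pair]
  rfl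

lemma condPrOf_pair_eq_of_condIndep [IsFiniteMeasure (ℙ : Measure Ω)] {R : Ω → α}
    {V : Ω → β} {W : Ω → γ} {r : α} {v : β} {w : γ}
    (hci : ℙ {ω | R ω = r ∧ V ω = v ∧ W ω = w} * ℙ {ω | W ω = w}
      = ℙ {ω | R ω = r ∧ W ω = w} * ℙ {ω | V ω = v ∧ W ω = w})
    (hvw : prOf (fun ω => (V ω, W ω)) (v, w) ≠ 0) :
    condPrOf R (fun ω => (V ω, W ω)) r (v, w) = condPrOf R W r w := by
  have hw : prOf W w ≠ 0 :=
    ((lt_of_le_of_ne (prOf_nonneg _ _) hvw.symm).trans_le (prOf_pair_le_right V W v w)).ne'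
  rw [condPrOf, condPrOf, div_eq_div_iff hvw hw]
  simp only [prOf, Prod.mk.injEq]
  simpa only [ENNReal.toReal_mul] using congrArg ENNReal.toReal hci

lemma condEntropy'_pair_eq_of_condIndep [IsFiniteMeasure (ℙ : Measure Ω)]
    [Fintype β] [Fintype γ] [MeasurableSpace β] [MeasurableSingletonClass β]
    (R : Ω → α) {V : Ω → β} (hV : Measurable V) (W : Ω → γ)
    (hci : ∀ r v w, ℙ {ω | R ω = r ∧ V ω = v ∧ W ω = w} * ℙ {ω | W ω = w}
      = ℙ {ω | R ω = r ∧ W ω = w} * ℙ {ω | V ω = v ∧ W ω = w}) :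
    condEntropy' R (fun ω => (V ω, W ω)) = condEntropy' R W := by
  simp only [condEntropy'_eq_tsum_condEntropyAt, tsum_fintype, Fintype.sum_prod_type,
    prOf_eq_sum_prOf_pair hV W, Finset.sum_mul]
  rw [Finset.sum_comm]
  refine Finset.sum_congr rfl fun w _ => Finset.sum_congr rfl fun v _ => ?_
  rcases eq_or_ne (prOf (fun ω => (V ω, W ω)) (v, w)) 0 with hvw | hvw
  · rw [hvw, zero_mul, zero_mul]
  · simp only [condEntropyAt, condPrOf_pair_eq_of_condIndep (hci _ v w) hvw]

end Entropy

section Trajectory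

variable {ι : Type*} [LinearOrder ι] {S : ι → Type*}

def splitFuturePast (t : ι) (m : ∀ i : {i // i ≠ t}, S i) :
    (∀ i : {i // t < i}, S i) × (∀ i : {i // i < t}, S i) :=
  (fun i => m ⟨i, i.2.ne'⟩, fun i => m ⟨i, i.2.ne⟩)

lemma splitFuturePast_injective (t : ι) :
    Function.Injective (splitFuturePast (S := S) t) := by
  intro m m' h
  funext ⟨i, hi⟩
  rcases hi.lt_or_gt with hlt | hgt
  · exact congrFun (congrArg Prod.snd h) ⟨i, hlt⟩
  · exact congrFun (congrArg Prod.fst h) ⟨i, hgt⟩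

end Trajectory

theorem condMutualInfo_return_eq_condEntropy_reward_given_past_general
    {Ω : Type*} [MeasureSpace Ω] [IsProbabilityMeasure (ℙ : Measure Ω)]
    {T : ℕ}
    (S : Fin T → Type*) [∀ i, Fintype (S i)]
    [∀ i, MeasurableSpace (S i)] [∀ i, MeasurableSingletonClass (S i)]
    (X : ∀ i : Fin T, Ω → S i) (hX : ∀ i, Measurable (X i))
    (f : ∀ i : Fin T, S i → ℝ) (t : Fin T)
    (hcondIndep : ∀ (r : ℝ) (fut : ∀ i : {i : Fin T // t < i}, S i)
        (past : ∀ i : {i : Fin T // i < t}, S i),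
      (ℙ : Measure Ω) {ω | f t (X t ω) = r ∧ (fun i : {i : Fin T // t < i} => X i ω) = fut
            ∧ (fun i : {i : Fin T // i < t} => X i ω) = past}
          * (ℙ : Measure Ω) {ω | (fun i : {i : Fin T // i < t} => X i ω) = past}
        = (ℙ : Measure Ω) {ω | f t (X t ω) = r
              ∧ (fun i : {i : Fin T // i < t} => X i ω) = past}
          * (ℙ : Measure Ω) {ω | (fun i : {i : Fin T // t < i} => X i ω) = fut
              ∧ (fun i : {i : Fin T // i < t} => X i ω) = past}) :
    condMutualInfo' (fun ω => ∑ k : Fin T, f k (X k ω)) (X t)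
        (fun ω (i : {i : Fin T // i ≠ t}) => X i ω)
      = condEntropy' (fun ω => f t (X t ω))
          (fun ω (i : {i : Fin T // i < t}) => X i ω) := by
  have hreturn : (fun ω => ∑ k, f k (X k ω))
      = fun ω => f t (X t ω) + ∑ i : {i : Fin T // i ≠ t}, f i (X i ω) :=
    funext fun ω => Fintype.sum_eq_add_sum_subtype_ne _ t
  have hdet : condEntropy' (fun ω => ∑ k, f k (X k ω))
      (fun ω => (X t ω, fun i : {i : Fin T // i ≠ t} => X i ω)) = 0 := by
    rw [hreturn]
    exact condEntropy'_comp_self (fun p : S t × (∀ i : {i : Fin T // i ≠ t}, S i) =>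
      f t p.1 + ∑ i : {i : Fin T // i ≠ t}, f i (p.2 i)) _
  rw [condMutualInfo', hdet, sub_zero, hreturn]
  refine (condEntropy'_add_comp _
    (fun m : ∀ i : {i : Fin T // i ≠ t}, S i => ∑ i : {i : Fin T // i ≠ t}, f i (m i)) _).trans ?_
  rw [← condEntropy'_comp_right_of_injective _ _ (splitFuturePast_injective t)]
  exact condEntropy'_pair_eq_of_condIndep _ (measurable_pi_lambda _ fun i => hX i.1) _ hcondIndep

/-- **Paper's Proposition 1.** Let `τ = (X 1, …, X T)` be the trajectory of per-timestep
joint state-action random variables of team `Tᵢ`, with values in finite sets, let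
`R t = f t (X t)` be the deterministic team reward at time `t`, and `Z = ∑_k R k` the team
return.  Fix `t`, and assume that `R t` is conditionally independent of the future
components `(X_{t+1}, …, X_T)` given the past components `(X_1, …, X_{t−1})` (the Markov
structure of the stochastic game).  Then the information of the joint policy at time `t`
equals the entropy of the team reward at time `t` given the trajectory up to time `t−1`:
`I(Z ; X t | X_{−t}) = H(R t | X_{1:t−1})`. -/
theorem condMutualInfo_return_eq_condEntropy_reward_given_past
    {Ω : Type*} [MeasureSpace Ω] [IsProbabilityMeasure (ℙ : Measure Ω)]
    {T : ℕ} (hT : 1 ≤ T)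
    (S : Fin T → Type*) [∀ i, Fintype (S i)]
    [∀ i, MeasurableSpace (S i)] [∀ i, MeasurableSingletonClass (S i)]
    (X : ∀ i : Fin T, Ω → S i) (hX : ∀ i, Measurable (X i))
    (f : ∀ i : Fin T, S i → ℝ) (t : Fin T)
    (hcondIndep : ∀ (r : ℝ) (fut : ∀ i : {i : Fin T // t < i}, S i)
        (past : ∀ i : {i : Fin T // i < t}, S i),
      (ℙ : Measure Ω) {ω | f t (X t ω) = r ∧ (fun i : {i : Fin T // t < i} => X i ω) = fut
            ∧ (fun i : {i : Fin T // i < t} => X i ω) = past}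
          * (ℙ : Measure Ω) {ω | (fun i : {i : Fin T // i < t} => X i ω) = past}
        = (ℙ : Measure Ω) {ω | f t (X t ω) = r
              ∧ (fun i : {i : Fin T // i < t} => X i ω) = past}
          * (ℙ : Measure Ω) {ω | (fun i : {i : Fin T // t < i} => X i ω) = fut
              ∧ (fun i : {i : Fin T // i < t} => X i ω) = past}) :
    condMutualInfo' (fun ω => ∑ k : Fin T, f k (X k ω)) (X t)
        (fun ω (i : {i : Fin T // i ≠ t}) => X i ω)
      = condEntropy' (fun ω => f t (X t ω))
          (fun ω (i : {i : Fin T // i < t}) => X i ω) :=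
  condMutualInfo_return_eq_condEntropy_reward_given_past_general S X hX f t hcondIndep
end
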